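/- Let θ be a proper convex piecewise linear function on ℝ^m and z̄ ∈ dom θ. Then there exists an open neighborhood O of z̄ such that ∂θ(z) ⊂ ∂θ(z̄) for every z ∈ O. -/

import Mathlib

noncomputable section
open Set Filter Topology Metric
open scoped RealInnerProductSpace Pointwise NNReal Classical

/-- `Euc m` is the Euclidean space `ℝ^m`. -/
abbrev Euc (m : ℕ) := EuclideanSpace ℝ (Fin m)

variable {F G : Type*} [NormedAddCommGroup F] [InnerProductSpace ℝ F]
  [NormedAddCommGroup G] [InnerProductSpace ℝ G]

/-- The (convex) subdifferential of an extended-real-valued function: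
`∂θ(z) = {v : θ(z') ≥ θ(z) + ⟨v, z' - z⟩ for all z'}`. -/
def subdiff (θ : F → EReal) (z : F) : Set F :=
  {v | ∀ z', θ z + ((⟪v, z' - z⟫ : ℝ) : EReal) ≤ θ z'}

/-- The Fréchet (regular) normal cone to `Ω` at `x`:
vectors `v` with `limsup_{y → x, y ∈ Ω} ⟨v, y - x⟩ / ‖y - x‖ ≤ 0`. -/
def frechetNormal (Ω : Set F) (x : F) : Set F :=
  {v | Filter.limsup (fun y => ⟪v, y - x⟫ / ‖y - x‖) (𝓝[Ω] x) ≤ 0}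

/-- The limiting (Mordukhovich) normal cone to `Ω` at `x`. -/
def limitingNormal (Ω : Set F) (x : F) : Set F :=
  {v | ∃ xs vs : ℕ → F, (∀ k, xs k ∈ Ω) ∧ Filter.Tendsto xs Filter.atTop (𝓝 x) ∧
    Filter.Tendsto vs Filter.atTop (𝓝 v) ∧ ∀ k, vs k ∈ frechetNormal Ω (xs k)}

/-- Pairing into the `ℓ²`-product of two inner product spaces. -/
def pl2 (x : F) (y : G) : WithLp 2 (F × G) := (WithLp.equiv 2 (F × G)).symm (x, y)

/-- The second-order subdifferential (generalized Hessian)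
`∂²θ(z,v)(u) = {w : (w,-u) ∈ N((z,v); gph ∂θ)}`. -/
def sosd (θ : F → EReal) (z v : F) (u : F) : Set F :=
  {w | pl2 w (-u) ∈ limitingNormal
    {q : WithLp 2 (F × F) | ((WithLp.equiv 2 (F × F)) q).2 ∈ subdiff θ ((WithLp.equiv 2 (F × F)) q).1}
    (pl2 z v)}

/-- The polyhedral domain `{z : ⟨d i, z⟩ ≤ β i for all i}` of a CPWL function. -/
def cpwlDom {m p : ℕ} (d : Fin p → Euc m) (β : Fin p → ℝ) : Set (Euc m) :=
  {z | ∀ i, ⟪d i, z⟫ ≤ β i}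

/-- The CPWL function determined by the data `(a, α, d, β)`:
`θ(z) = max_i (⟨a i, z⟩ - α i)` on its polyhedral domain and `+∞` outside. -/
def cpwlFun {m l p : ℕ} (a : Fin l → Euc m) (α : Fin l → ℝ) (d : Fin p → Euc m)
    (β : Fin p → ℝ) : Euc m → EReal :=
  fun z => if z ∈ cpwlDom d β then (((⨆ i, (⟪a i, z⟫ - α i)) : ℝ) : EReal) else ⊤

/-- Active indices of the max expression at `z`. -/
def Kact {m l p : ℕ} (a : Fin l → Euc m) (α : Fin l → ℝ) (d : Fin p → Euc m) (β : Fin p → ℝ)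
    (z : Euc m) : Set (Fin l) :=
  {i | cpwlFun a α d β z = ((⟪a i, z⟫ - α i : ℝ) : EReal)}

/-- Active indices of the domain inequalities at `z`. -/
def Iact {m p : ℕ} (d : Fin p → Euc m) (β : Fin p → ℝ) (z : Euc m) : Set (Fin p) :=
  {i | ⟪d i, z⟫ = β i}

/-- Convex conic hull: all finite nonnegative combinations of elements of `s`. -/
def coneHull (s : Set F) : Set F :=
  {x | ∃ (n : ℕ) (c : Fin n → ℝ) (y : Fin n → F), (∀ i, 0 ≤ c i) ∧ (∀ i, y i ∈ s) ∧
    x = ∑ i, c i • y i}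

/-- `Spar θ z` is the linear subspace parallel to the affine hull of `∂θ(z)`. -/
def Spar (θ : F → EReal) (z : F) : Submodule ℝ F := (affineSpan ℝ (subdiff θ z)).direction

/-- A convex polyhedron: a finite intersection of closed halfspaces. -/
def IsPolyhedron {V : Type*} [AddCommGroup V] [Module ℝ V] (C : Set V) : Prop :=
  ∃ (N : ℕ) (f : Fin N → V →ₗ[ℝ] ℝ) (b : Fin N → ℝ), C = {x | ∀ i, f i x ≤ b i}

/-- A proper convex piecewise linear function with values in `ℝ ∪ {+∞}`:
its epigraph is a convex polyhedron, it never takes the value `-∞`, and it is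
not identically `+∞`. -/
def IsCPWL {V : Type*} [AddCommGroup V] [Module ℝ V] (f : V → EReal) : Prop :=
  IsPolyhedron {xt : V × ℝ | f xt.1 ≤ (xt.2 : EReal)} ∧ (∀ x, f x ≠ ⊥) ∧ (∃ x, f x ≠ ⊤)

/-- Local argmin set `M_γ(w,v)` of `x ↦ φ(x,w) - ⟨v,x⟩` over the ball `‖x - xb‖ ≤ γ`,
with the convention that minimizers at which the objective is `+∞` are discarded. -/
def argminLoc {n d : ℕ} (φ : Euc n → Euc d → EReal) (xb : Euc n) (γ : ℝ) (w : Euc d)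
    (v : Euc n) : Set (Euc n) :=
  {x | ‖x - xb‖ ≤ γ ∧ φ x w ≠ ⊤ ∧
    ∀ y, ‖y - xb‖ ≤ γ → φ x w - ((⟪v, x⟫ : ℝ) : EReal) ≤ φ y w - ((⟪v, y⟫ : ℝ) : EReal)}

/-- Local optimal value `m_γ(w,v)` of `x ↦ φ(x,w) - ⟨v,x⟩` over the ball `‖x - xb‖ ≤ γ`. -/
def infLoc {n d : ℕ} (φ : Euc n → Euc d → EReal) (xb : Euc n) (γ : ℝ) (w : Euc d)
    (v : Euc n) : EReal :=
  ⨅ x ∈ {x : Euc n | ‖x - xb‖ ≤ γ}, (φ x w - ((⟪v, x⟫ : ℝ) : EReal))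

/-- `xb` is a fully stable locally optimal solution of
`minimize φ(x,wb) - ⟨vb,x⟩` : for some `γ > 0` and neighborhoods `W × V` of `(wb,vb)`,
the local argmin map is single-valued and Lipschitz with value `xb` at `(wb,vb)`, and the
local optimal value function is finite and Lipschitz. -/
def FullyStableSol {n d : ℕ} (φ : Euc n → Euc d → EReal) (xb : Euc n) (wb : Euc d)
    (vb : Euc n) : Prop :=
  ∃ γ > (0 : ℝ), ∃ W ∈ 𝓝 wb, ∃ V ∈ 𝓝 vb,
    (∃ σ : Euc d × Euc n → Euc n,
      (∃ K : ℝ≥0, LipschitzOnWith K σ (W ×ˢ V)) ∧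
      (∀ w ∈ W, ∀ v ∈ V, argminLoc φ xb γ w v = {σ (w, v)}) ∧ σ (wb, vb) = xb) ∧
    (∃ μ : Euc d × Euc n → ℝ,
      (∃ K : ℝ≥0, LipschitzOnWith K μ (W ×ˢ V)) ∧
      ∀ w ∈ W, ∀ v ∈ V, infLoc φ xb γ w v = ((μ (w, v) : ℝ) : EReal))

/-- The partial limiting subdifferential `∂ₓψ(x,w)` defined through the limiting normal
cone to the epigraph of `ψ(·,w)`. -/
def partialSubdiffX {n d : ℕ} (ψ : Euc n → Euc d → EReal) (x : Euc n) (w : Euc d) :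
    Set (Euc n) :=
  {v | ∃ r : ℝ, ψ x w = (r : EReal) ∧
    pl2 v (-1 : ℝ) ∈ limitingNormal
      {q : WithLp 2 (Euc n × ℝ) |
        ψ ((WithLp.equiv 2 (Euc n × ℝ)) q).1 w ≤ ((((WithLp.equiv 2 (Euc n × ℝ)) q).2 : ℝ) : EReal)}
      (pl2 x r)}

/-- The coderivative `D*∂ₓψ(xb,wb,qb)(u)` of the partial subdifferential mapping,
via the limiting normal cone to its graph in `ℝ^n × ℝ^d × ℝ^n`. -/
def coderivPartialSubdiffX {n d : ℕ} (ψ : Euc n → Euc d → EReal) (xb : Euc n) (wb : Euc d)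
    (qb : Euc n) (u : Euc n) : Set (Euc n × Euc d) :=
  {P | pl2 (pl2 P.1 P.2) (-u) ∈ limitingNormal
    {t : WithLp 2 (WithLp 2 (Euc n × Euc d) × Euc n) |
      ((WithLp.equiv 2 (WithLp 2 (Euc n × Euc d) × Euc n)) t).2 ∈ partialSubdiffX ψ
        ((WithLp.equiv 2 (Euc n × Euc d)) (((WithLp.equiv 2 (WithLp 2 (Euc n × Euc d) × Euc n)) t).1)).1
        ((WithLp.equiv 2 (Euc n × Euc d)) (((WithLp.equiv 2 (WithLp 2 (Euc n × Euc d) × Euc n)) t).1)).2}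
    (pl2 (pl2 xb wb) qb)}

/-- Partial Hessian in `x` : the derivative in `x` of the partial gradient in `x`. -/
def hessXX {n d : ℕ} (g : Euc n → Euc d → ℝ) (xb : Euc n) (wb : Euc d) : Euc n →L[ℝ] Euc n :=
  fderiv ℝ (fun x => gradient (fun x' => g x' wb) x) xb

/-- Mixed partial Hessian: derivative in `w` of the partial gradient in `x`. -/
def hessWX {n d : ℕ} (g : Euc n → Euc d → ℝ) (xb : Euc n) (wb : Euc d) : Euc d →L[ℝ] Euc n :=
  fderiv ℝ (fun w => gradient (fun x' => g x' w) xb) wb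

/-!
Near `zb`, the constraints and affine pieces that are inactive at `zb` stay inactive. Hence for
`z` close to `zb` with `z ∈ dom θ`, the reflection `w = z + (z - zb)` of `zb` through `z` lies in
`dom θ`, and `θ w` is attained by a piece active at `zb`, which gives `θ w + θ zb ≤ 2 θ z`.
A subgradient `v` at `z` satisfies `θ z + ⟪v, z - zb⟫ ≤ θ w`, so `θ zb ≤ θ z + ⟪v, zb - z⟫`,
and adding `⟪v, z' - zb⟫` turns the subgradient inequality at `z` into the one at `zb`.
-/

theorem Filter.eventually_forall_lt_imp_lt {ι X : Type*} [Finite ι] [TopologicalSpace X]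
    {f g : ι → X → ℝ} {x : X} (hf : ∀ i, ContinuousAt (f i) x) (hg : ∀ i, ContinuousAt (g i) x) :
    ∀ᶠ y in 𝓝 x, ∀ i, f i x < g i x → f i y < g i y := by
  refine eventually_all.2 fun i => ?_
  by_cases h : f i x < g i x
  · exact ((hf i).eventually_lt (hg i) h).mono fun _ hy _ => hy
  · exact Eventually.of_forall fun _ hx => absurd hx h

theorem Real.iSup_add_iSup_le_two_mul_iSup {ι : Type*} [Finite ι] {u s t : ι → ℝ}
    (hust : ∀ i, u i + s i = 2 * t i) (hlt : ∀ i j, s i < s j → u i < u j) :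
    (⨆ i, u i) + ⨆ i, s i ≤ 2 * ⨆ i, t i := by
  rcases isEmpty_or_nonempty ι with hι | hι
  · simp only [Real.iSup_of_isEmpty]; norm_num
  obtain ⟨i, hi⟩ := exists_eq_ciSup_of_finite (f := u)
  -- a maximizer of `u` also maximizes `s`, since strict comparisons in `s` persist in `u`
  have hs : ⨆ j, s j = s i :=
    le_antisymm (ciSup_le fun j => not_lt.1 fun hij =>
        (hlt i j hij).not_ge (hi ▸ le_ciSup (Finite.bddAbove_range u) j))
      (le_ciSup (Finite.bddAbove_range s) i)
  have ht : t i ≤ ⨆ j, t j := le_ciSup (Finite.bddAbove_range t) i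
  rw [← hi, hs, hust i]
  linarith

theorem ne_top_of_mem_subdiff {θ : F → EReal} {z zb v : F} (hv : v ∈ subdiff θ z)
    (hzb : θ zb ≠ ⊤) : θ z ≠ ⊤ := by
  intro hz
  have h := hv zb
  rw [hz, EReal.top_add_coe, top_le_iff] at h
  exact hzb h

theorem mem_subdiff_of_le_add_inner {θ : F → EReal} {z zb v : F} (hv : v ∈ subdiff θ z)
    (h : θ zb ≤ θ z + ((⟪v, zb - z⟫ : ℝ) : EReal)) : v ∈ subdiff θ zb := fun z' =>
  calc θ zb + ((⟪v, z' - zb⟫ : ℝ) : EReal)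
      ≤ θ z + ((⟪v, zb - z⟫ : ℝ) : EReal) + ((⟪v, z' - zb⟫ : ℝ) : EReal) := by gcongr
    _ = θ z + ((⟪v, z' - z⟫ : ℝ) : EReal) := by
      rw [add_assoc, ← EReal.coe_add, ← inner_add_right, sub_add_sub_cancel']
    _ ≤ θ z' := hv z'

theorem mem_subdiff_of_add_le_two_mul {θ : F → EReal} {z zb v : F} {r s u : ℝ}
    (hzb : θ zb = r) (hz : θ z = s) (hw : θ (z + (z - zb)) = u) (hmid : u + r ≤ 2 * s)
    (hv : v ∈ subdiff θ z) : v ∈ subdiff θ zb := by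
  refine mem_subdiff_of_le_add_inner hv ?_
  have hvw := hv (z + (z - zb))
  rw [hz, hw, add_sub_cancel_left, ← EReal.coe_add, EReal.coe_le_coe_iff] at hvw
  rw [hzb, hz, ← EReal.coe_add, EReal.coe_le_coe_iff, ← neg_sub z zb, inner_neg_right]
  linarith

section CPWL

variable {m l p : ℕ} {a : Fin l → Euc m} {α : Fin l → ℝ} {d : Fin p → Euc m} {β : Fin p → ℝ}
  {z zb : Euc m}

theorem cpwlFun_of_mem (h : z ∈ cpwlDom d β) :
    cpwlFun a α d β z = ((⨆ i, (⟪a i, z⟫ - α i) : ℝ) : EReal) :=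
  if_pos h

theorem mem_cpwlDom_of_mem_subdiff {v : Euc m} (hzb : zb ∈ cpwlDom d β)
    (hv : v ∈ subdiff (cpwlFun a α d β) z) : z ∈ cpwlDom d β := by
  by_contra hz
  refine ne_top_of_mem_subdiff (zb := zb) hv ?_ (if_neg hz)
  rw [cpwlFun_of_mem hzb]
  exact EReal.coe_ne_top _

theorem add_sub_mem_cpwlDom (hzb : zb ∈ cpwlDom d β) (hz : z ∈ cpwlDom d β)
    (h : ∀ i, ⟪d i, zb⟫ < β i → ⟪d i, z + (z - zb)⟫ < β i) : z + (z - zb) ∈ cpwlDom d β := by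
  intro i
  rcases (hzb i).lt_or_eq with hi | hi
  · exact (h i hi).le
  · rw [inner_add_right, inner_sub_right]
    linarith [hz i]

end CPWL

theorem subdiff_cpwl_locally_subset_general {m l p : ℕ}
    (a : Fin l → Euc m) (α : Fin l → ℝ) (d : Fin p → Euc m) (β : Fin p → ℝ)
    (zb : Euc m) (hzb : zb ∈ cpwlDom d β) :
    ∃ O : Set (Euc m), IsOpen O ∧ zb ∈ O ∧
      ∀ z ∈ O, subdiff (cpwlFun a α d β) z ⊆ subdiff (cpwlFun a α d β) zb := by
  have hinner : ∀ c : Euc m, Continuous fun y => ⟪c, y⟫ := fun c =>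
    continuous_const.inner continuous_id
  have hpiece : ∀ i, Continuous fun y => ⟪a i, y⟫ - α i := fun i =>
    (hinner (a i)).sub continuous_const
  have hinactive := (eventually_forall_lt_imp_lt (f := fun i y => ⟪d i, y⟫) (g := fun i _ => β i)
      (x := zb) (fun i => (hinner (d i)).continuousAt) fun _ => continuousAt_const).and
    (eventually_forall_lt_imp_lt (f := fun (ij : Fin l × Fin l) y => ⟪a ij.1, y⟫ - α ij.1)
      (g := fun ij y => ⟪a ij.2, y⟫ - α ij.2) (x := zb)
      (fun ij => (hpiece ij.1).continuousAt) fun ij => (hpiece ij.2).continuousAt)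
  have hreflect : Tendsto (fun z => z + (z - zb)) (𝓝 zb) (𝓝 zb) :=
    (continuous_id.add (continuous_id.sub continuous_const)).tendsto' zb zb (by simp)
  obtain ⟨O, hO, hOopen, hzbO⟩ := _root_.eventually_nhds_iff.1 (hreflect.eventually hinactive)
  refine ⟨O, hOopen, hzbO, fun z hz v hv => ?_⟩
  obtain ⟨hdom, hpieces⟩ := hO z hz
  have hzdom := mem_cpwlDom_of_mem_subdiff hzb hv
  refine mem_subdiff_of_add_le_two_mul (cpwlFun_of_mem hzb) (cpwlFun_of_mem hzdom)
    (cpwlFun_of_mem (add_sub_mem_cpwlDom hzb hzdom hdom)) ?_ hv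
  refine Real.iSup_add_iSup_le_two_mul_iSup (fun i => ?_) fun i j => hpieces (i, j)
  rw [inner_add_right, inner_sub_right]
  ring

/-- Local upper subdifferential stability of CPWL functions: there is an
open neighborhood `O` of `zb` such that `∂θ(z) ⊆ ∂θ(zb)` for all `z ∈ O`. -/
theorem subdiff_cpwl_locally_subset {m l p : ℕ} (hl : 0 < l)
    (a : Fin l → Euc m) (α : Fin l → ℝ) (d : Fin p → Euc m) (β : Fin p → ℝ)
    (hdom : (cpwlDom d β).Nonempty) (zb : Euc m) (hzb : zb ∈ cpwlDom d β) :
    ∃ O : Set (Euc m), IsOpen O ∧ zb ∈ O ∧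
      ∀ z ∈ O, subdiff (cpwlFun a α d β) z ⊆ subdiff (cpwlFun a α d β) zb :=
  subdiff_cpwl_locally_subset_general a α d β zb hzb
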